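/- Let φ : X → ℝ be continuous on X = 𝒜^(ℤ^d). Then ZTA(φ) ⊆ MM(φ), and moreover every μ ∈ ZTA(φ) satisfies h(μ) = h_φ, i.e., μ maximizes entropy among all maximizing measures of φ. -/

import Mathlib

/-!
Let `μₖ ∈ ES(βₖφ)` converge weakly to `μ` with `βₖ → ∞`. Entropy is bounded by `C = |𝒜|`, so
comparing `μₖ` with any invariant `ν` in the variational principle gives
`∫φ dν ≤ ∫φ dμₖ + C/βₖ`, and in the limit `μ` is maximizing. If `η` is maximizing, then
`∫φ dμₖ ≤ ∫φ dη`, and the same comparison gives `h(η) ≤ h(μₖ)`. Entropy is an infimum of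
block entropies, which are continuous under weak convergence because cylinders are clopen;
hence it is upper semicontinuous and `h(η) ≤ h(μ)`.
-/

open MeasureTheory Filter Topology
open scoped ENNReal Classical

namespace Freezing

/-- The configuration space `X = 𝒜^(ℤ^d)`. -/
abbrev Cfg (d : ℕ) (A : Type) : Type := (Fin d → ℤ) → A

section Defs

variable {d : ℕ} {A : Type} [Fintype A] [TopologicalSpace A] [DiscreteTopology A]
  [MeasurableSpace A] [BorelSpace A]

/-- The shift action: `(σ^n x)_m = x_{n+m}`. -/
def shift (n : Fin d → ℤ) (x : Cfg d A) : Cfg d A := fun m => x (n + m)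

/-- Shift-invariance of a measure. -/
def Invariant (μ : Measure (Cfg d A)) : Prop :=
  ∀ n : Fin d → ℤ, Measure.map (shift n) μ = μ

/-- Cylinder set `[w]` for a pattern `w` on `E_n = ([0,n-1] ∩ ℤ)^d`. -/
def cylE (n : ℕ) (w : (Fin d → Fin n) → A) : Set (Cfg d A) :=
  { x | ∀ m : Fin d → Fin n, x (fun i => ((m i : ℕ) : ℤ)) = w m }

/-- Measure-theoretic entropy `h(μ) = inf_{n ≥ 1} n^{-d} Σ_w (-μ[w] log μ[w])`. -/
noncomputable def entropy (μ : Measure (Cfg d A)) : ℝ :=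
  ⨅ n : {n : ℕ // 1 ≤ n},
    ((n.1 : ℝ) ^ d)⁻¹ *
      ∑ w : (Fin d → Fin n.1) → A, Real.negMulLog (μ (cylE n.1 w)).toReal

/-- Pressure `p_φ(β) = sup { h(μ) + β ∫ φ dμ }` over shift-invariant probability measures. -/
noncomputable def pressure (φ : Cfg d A → ℝ) (β : ℝ) : ℝ :=
  sSup { r | ∃ μ : Measure (Cfg d A), IsProbabilityMeasure μ ∧ Invariant μ ∧
    r = entropy μ + β * ∫ x, φ x ∂μ }

/-- The set of equilibrium states of `βφ`. -/
def ES (φ : Cfg d A → ℝ) (β : ℝ) : Set (Measure (Cfg d A)) :=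
  { μ | IsProbabilityMeasure μ ∧ Invariant μ ∧
      entropy μ + β * ∫ x, φ x ∂μ = pressure φ β }

/-- `φ` has a freezing phase transition at `βc`. -/
def FreezingPT (φ : Cfg d A → ℝ) (βc : ℝ) : Prop :=
  (∀ β β' : ℝ, βc < β → βc < β' → ES φ β = ES φ β') ∧
  (∀ β β' : ℝ, β < βc → βc < β' → ES φ β ≠ ES φ β')

/-- `s_φ = sup { ∫ φ dμ }` over shift-invariant probability measures. -/
noncomputable def sPhi (φ : Cfg d A → ℝ) : ℝ :=
  sSup { r | ∃ μ : Measure (Cfg d A), IsProbabilityMeasure μ ∧ Invariant μ ∧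
    r = ∫ x, φ x ∂μ }

/-- The set of maximizing measures of `φ`. -/
def MM (φ : Cfg d A → ℝ) : Set (Measure (Cfg d A)) :=
  { μ | IsProbabilityMeasure μ ∧ Invariant μ ∧ (∫ x, φ x ∂μ) = sPhi φ }

/-- `h_φ = sup { h(η) : η ∈ MM(φ) }`. -/
noncomputable def hPhi (φ : Cfg d A → ℝ) : ℝ :=
  sSup { r | ∃ μ ∈ MM φ, r = entropy μ }

/-- The zero-temperature accumulation points of `φ`. -/
def ZTA (φ : Cfg d A → ℝ) : Set (Measure (Cfg d A)) :=
  { μ | IsProbabilityMeasure μ ∧ Invariant μ ∧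
      ∃ (β : ℕ → ℝ) (μs : ℕ → Measure (Cfg d A)),
        Tendsto β atTop atTop ∧ (∀ k, μs k ∈ ES φ (β k)) ∧
        ∀ f : Cfg d A → ℝ, Continuous f →
          Tendsto (fun k => ∫ x, f x ∂(μs k)) atTop (𝓝 (∫ x, f x ∂μ)) }

/-- A subshift: nonempty, closed, invariant under every shift. -/
def IsSubshift (X₀ : Set (Cfg d A)) : Prop :=
  X₀.Nonempty ∧ IsClosed X₀ ∧ ∀ n : Fin d → ℤ, ∀ x ∈ X₀, shift n x ∈ X₀

/-- The language `L_{E_n}(X₀)`: patterns on `E_n` appearing at the origin of points of `X₀`. -/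
def langE (X₀ : Set (Cfg d A)) (n : ℕ) : Set ((Fin d → Fin n) → A) :=
  { w | ∃ x ∈ X₀, ∀ m : Fin d → Fin n, x (fun i => ((m i : ℕ) : ℤ)) = w m }

/-- Topological entropy `h_top(X₀) = inf_{n ≥ 1} n^{-d} log |L_{E_n}(X₀)|`. -/
noncomputable def topEnt (X₀ : Set (Cfg d A)) : ℝ :=
  ⨅ n : {n : ℕ // 1 ≤ n}, ((n.1 : ℝ) ^ d)⁻¹ * Real.log ((langE X₀ n.1).ncard)

/-- A measure of maximal entropy on the subshift `X₀`. -/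
def IsMME (X₀ : Set (Cfg d A)) (μ : Measure (Cfg d A)) : Prop :=
  IsProbabilityMeasure μ ∧ Invariant μ ∧ μ X₀ = 1 ∧ entropy μ = topEnt X₀

/-- Ergodicity: invariant Borel sets have measure `0` or `1`. -/
def ErgodicInv (μ : Measure (Cfg d A)) : Prop :=
  ∀ s : Set (Cfg d A), MeasurableSet s → (∀ n : Fin d → ℤ, shift n ⁻¹' s = s) →
    μ s = 0 ∨ μ s = 1

/-- The `n`-th variation `var_n φ`, over pairs agreeing on `B_n = ([-n,n] ∩ ℤ)^d`. -/
noncomputable def varPot (φ : Cfg d A → ℝ) (n : ℕ) : ℝ :=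
  sSup { r | ∃ x y : Cfg d A,
    (∀ m : Fin d → ℤ, (∀ i, |m i| ≤ (n : ℤ)) → x m = y m) ∧ r = |φ x - φ y| }

/-- Sup-norm `‖m‖_∞` of a site `m ∈ ℤ^d`. -/
def supNorm (m : Fin d → ℤ) : ℕ := Finset.univ.sup fun i => (m i).natAbs

/-- The metric `dist(x,y) = 2^{-min{‖n‖_∞ : x_n ≠ y_n}}`. -/
noncomputable def cfgDist (x y : Cfg d A) : ℝ :=
  if x = y then 0
  else (2 : ℝ) ^
    (-((sInf { k : ℕ | ∃ m : Fin d → ℤ, supNorm m = k ∧ x m ≠ y m } : ℕ) : ℤ))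

/-- Distance from a point to a subshift. -/
noncomputable def distToSub (X₀ : Set (Cfg d A)) (x : Cfg d A) : ℝ :=
  sInf { r | ∃ y ∈ X₀, r = cfgDist x y }

end Defs

section BlockEntropy

variable {d : ℕ} {A : Type} [Fintype A] [MeasurableSpace A]

noncomputable def blockEntropy (n : ℕ) (ν : Measure (Cfg d A)) : ℝ :=
  ((n : ℝ) ^ d)⁻¹ * ∑ w : (Fin d → Fin n) → A, Real.negMulLog (ν (cylE n w)).toReal

lemma blockEntropy_nonneg (n : ℕ) (ν : Measure (Cfg d A)) [IsProbabilityMeasure ν] :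
    0 ≤ blockEntropy n ν :=
  mul_nonneg (by positivity) <| Finset.sum_nonneg fun _ _ =>
    Real.negMulLog_nonneg ENNReal.toReal_nonneg measureReal_le_one

lemma entropy_le_blockEntropy (ν : Measure (Cfg d A)) [IsProbabilityMeasure ν] {n : ℕ}
    (hn : 1 ≤ n) : entropy ν ≤ blockEntropy n ν :=
  ciInf_le ⟨0, by rintro r ⟨m, rfl⟩; exact blockEntropy_nonneg m.1 ν⟩
    (⟨n, hn⟩ : {n : ℕ // 1 ≤ n})

lemma entropy_nonneg (ν : Measure (Cfg d A)) [IsProbabilityMeasure ν] : 0 ≤ entropy ν :=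
  le_ciInf fun n => blockEntropy_nonneg n.1 ν

lemma entropy_le_card (ν : Measure (Cfg d A)) [IsProbabilityMeasure ν] :
    entropy ν ≤ Fintype.card A := by
  refine (entropy_le_blockEntropy ν le_rfl).trans ?_
  have hterm (w : (Fin d → Fin 1) → A) : Real.negMulLog (ν (cylE 1 w)).toReal ≤ 1 :=
    (Real.negMulLog_le_one_sub_self ENNReal.toReal_nonneg).trans (by simp)
  simpa [blockEntropy] using Finset.sum_le_card_nsmul Finset.univ _ _ fun w _ => hterm w

end BlockEntropy

section WeakLimits

variable {d : ℕ} {A : Type} [TopologicalSpace A] [DiscreteTopology A]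

lemma isClopen_cylE {n : ℕ} (w : (Fin d → Fin n) → A) : IsClopen (cylE n w) := by
  have hcyl : cylE (d := d) n w =
      ⋂ m : Fin d → Fin n, (fun x : Cfg d A => x (fun i => ((m i : ℕ) : ℤ))) ⁻¹' {w m} := by
    ext x
    simp [cylE]
  rw [hcyl]
  exact isClopen_iInter_of_finite fun m => (isClopen_discrete _).preimage (continuous_apply _)

variable [Fintype A] [MeasurableSpace A] [BorelSpace A]
  {μ : Measure (Cfg d A)} {μs : ℕ → Measure (Cfg d A)}

lemma tendsto_measure_cylE_toReal
    (hconv : ∀ f : Cfg d A → ℝ, Continuous f →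
      Tendsto (fun k => ∫ x, f x ∂(μs k)) atTop (𝓝 (∫ x, f x ∂μ)))
    {n : ℕ} (w : (Fin d → Fin n) → A) :
    Tendsto (fun k => (μs k (cylE n w)).toReal) atTop (𝓝 (μ (cylE n w)).toReal) := by
  have hclopen := isClopen_cylE (d := d) w
  have hind : Continuous ((cylE n w).indicator (1 : Cfg d A → ℝ)) :=
    continuous_indicator (by simp [hclopen]) continuous_const.continuousOn
  simpa [integral_indicator_one hclopen.isClosed.measurableSet, measureReal_def] using
    hconv _ hind

lemma tendsto_blockEntropy
    (hconv : ∀ f : Cfg d A → ℝ, Continuous f →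
      Tendsto (fun k => ∫ x, f x ∂(μs k)) atTop (𝓝 (∫ x, f x ∂μ)))
    (n : ℕ) : Tendsto (fun k => blockEntropy n (μs k)) atTop (𝓝 (blockEntropy n μ)) :=
  tendsto_const_nhds.mul <| tendsto_finsetSum _ fun w _ =>
    (Real.continuous_negMulLog.tendsto _).comp (tendsto_measure_cylE_toReal hconv w)

lemma le_entropy_of_eventually_le
    (hconv : ∀ f : Cfg d A → ℝ, Continuous f →
      Tendsto (fun k => ∫ x, f x ∂(μs k)) atTop (𝓝 (∫ x, f x ∂μ)))
    (hprob : ∀ k, IsProbabilityMeasure (μs k)) {a : ℝ}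
    (hle : ∀ᶠ k in atTop, a ≤ entropy (μs k)) : a ≤ entropy μ :=
  le_ciInf fun n => ge_of_tendsto (tendsto_blockEntropy hconv n.1) <|
    hle.mono fun k hk => by
      have := hprob k
      exact hk.trans (entropy_le_blockEntropy (μs k) n.2)

end WeakLimits

section EquilibriumStates

variable {d : ℕ} {A : Type} [Fintype A] [TopologicalSpace A] [MeasurableSpace A]
  {φ : Cfg d A → ℝ}

lemma exists_abs_integral_le (hφ : Continuous φ) :
    ∃ M, ∀ ν : Measure (Cfg d A), IsProbabilityMeasure ν → |∫ x, φ x ∂ν| ≤ M := by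
  obtain ⟨M, hM⟩ := isCompact_univ.exists_bound_of_continuousOn hφ.continuousOn
  refine ⟨M, fun ν _ => ?_⟩
  simpa using norm_integral_le_of_norm_le_const (μ := ν) (.of_forall fun x => hM x trivial)

lemma bddAbove_integral (hφ : Continuous φ) :
    BddAbove { r | ∃ ν : Measure (Cfg d A), IsProbabilityMeasure ν ∧ Invariant ν ∧
      r = ∫ x, φ x ∂ν } := by
  obtain ⟨M, hM⟩ := exists_abs_integral_le hφ
  exact ⟨M, by rintro r ⟨ν, hν, -, rfl⟩; exact (le_abs_self _).trans (hM ν hν)⟩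

lemma integral_le_sPhi (hφ : Continuous φ) {ν : Measure (Cfg d A)} [IsProbabilityMeasure ν]
    (hν : Invariant ν) : ∫ x, φ x ∂ν ≤ sPhi φ :=
  le_csSup (bddAbove_integral hφ) ⟨ν, inferInstance, hν, rfl⟩

lemma bddAbove_pressure (hφ : Continuous φ) (β : ℝ) :
    BddAbove { r | ∃ ν : Measure (Cfg d A), IsProbabilityMeasure ν ∧ Invariant ν ∧
      r = entropy ν + β * ∫ x, φ x ∂ν } := by
  obtain ⟨M, hM⟩ := exists_abs_integral_le hφ
  refine ⟨Fintype.card A + |β| * M, ?_⟩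
  rintro r ⟨ν, hν, -, rfl⟩
  have hint : β * ∫ x, φ x ∂ν ≤ |β| * M := calc
    β * ∫ x, φ x ∂ν ≤ |β| * |∫ x, φ x ∂ν| := (le_abs_self _).trans_eq (abs_mul _ _)
    _ ≤ |β| * M := by gcongr; exact hM ν hν
  linarith [entropy_le_card ν]

lemma add_le_of_mem_ES (hφ : Continuous φ) {β : ℝ} {μ ν : Measure (Cfg d A)}
    (hμ : μ ∈ ES φ β) [IsProbabilityMeasure ν] (hν : Invariant ν) :
    entropy ν + β * ∫ x, φ x ∂ν ≤ entropy μ + β * ∫ x, φ x ∂μ :=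
  hμ.2.2 ▸ le_csSup (bddAbove_pressure hφ β) ⟨ν, inferInstance, hν, rfl⟩

lemma integral_le_add_of_mem_ES (hφ : Continuous φ) {β : ℝ} (hβ : 0 < β)
    {μ ν : Measure (Cfg d A)} (hμ : μ ∈ ES φ β) [IsProbabilityMeasure ν] (hν : Invariant ν) :
    ∫ x, φ x ∂ν ≤ ∫ x, φ x ∂μ + Fintype.card A / β := by
  have := hμ.1
  have hgap := add_le_of_mem_ES hφ hμ hν
  have hβgap : β * (∫ x, φ x ∂ν - ∫ x, φ x ∂μ) ≤ Fintype.card A := by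
    linarith [entropy_nonneg ν, entropy_le_card μ]
  rw [← sub_le_iff_le_add', le_div_iff₀ hβ, mul_comm]
  exact hβgap

lemma entropy_le_of_mem_ES_of_mem_MM (hφ : Continuous φ) {β : ℝ} (hβ : 0 ≤ β)
    {μ η : Measure (Cfg d A)} (hμ : μ ∈ ES φ β) (hη : η ∈ MM φ) : entropy η ≤ entropy μ := by
  obtain ⟨hηprob, hηinv, hηmax⟩ := hη
  have := hμ.1
  have hint : β * ∫ x, φ x ∂μ ≤ β * ∫ x, φ x ∂η :=
    mul_le_mul_of_nonneg_left (hηmax ▸ integral_le_sPhi hφ hμ.2.1) hβ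
  linarith [add_le_of_mem_ES hφ hμ hηinv]

lemma ZTA_subset_MM (hφ : Continuous φ) : ZTA φ ⊆ MM φ := by
  rintro μ ⟨hμ, hμinv, β, μs, hβ, hES, hconv⟩
  refine ⟨hμ, hμinv, le_antisymm (integral_le_sPhi hφ hμinv) ?_⟩
  refine csSup_le ⟨_, μ, hμ, hμinv, rfl⟩ ?_
  rintro r ⟨ν, hν, hνinv, rfl⟩
  have hlim : Tendsto (fun k => ∫ x, φ x ∂(μs k) + Fintype.card A / β k) atTop
      (𝓝 (∫ x, φ x ∂μ + 0)) :=
    (hconv φ hφ).add (tendsto_const_nhds.div_atTop hβ)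
  refine ge_of_tendsto (by simpa using hlim) ?_
  filter_upwards [hβ.eventually_gt_atTop 0] with k hk
  exact integral_le_add_of_mem_ES hφ hk (hES k) hνinv

end EquilibriumStates

section ZeroTemperature

variable {d : ℕ} {A : Type} [Fintype A] [TopologicalSpace A] [DiscreteTopology A]
  [MeasurableSpace A] [BorelSpace A] {φ : Cfg d A → ℝ}

lemma entropy_eq_hPhi_of_mem_ZTA (hφ : Continuous φ) {μ : Measure (Cfg d A)}
    (hμ : μ ∈ ZTA φ) : entropy μ = hPhi φ := by
  have hμMM := ZTA_subset_MM hφ hμ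
  obtain ⟨-, -, β, μs, hβ, hES, hconv⟩ := hμ
  have hbdd : BddAbove { r | ∃ η ∈ MM φ, r = entropy η } := by
    refine ⟨Fintype.card A, ?_⟩
    rintro r ⟨η, hη, rfl⟩
    have := hη.1
    exact entropy_le_card η
  refine le_antisymm (le_csSup hbdd ⟨μ, hμMM, rfl⟩) (csSup_le ⟨_, μ, hμMM, rfl⟩ ?_)
  rintro r ⟨η, hη, rfl⟩
  refine le_entropy_of_eventually_le hconv (fun k => (hES k).1) ?_
  filter_upwards [hβ.eventually_ge_atTop 0] with k hk
  exact entropy_le_of_mem_ES_of_mem_MM hφ hk (hES k) hη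

end ZeroTemperature

theorem statement14_general (d : ℕ) (A : Type) [Fintype A] [TopologicalSpace A]
    [DiscreteTopology A] [MeasurableSpace A] [BorelSpace A]
    (φ : Cfg d A → ℝ) (hφ : Continuous φ) :
    ZTA φ ⊆ MM φ ∧ ∀ μ ∈ ZTA φ, entropy μ = hPhi φ :=
  ⟨ZTA_subset_MM hφ, fun _ hμ => entropy_eq_hPhi_of_mem_ZTA hφ hμ⟩

/-- **Theorem 6.3 (i).** `ZTA(φ) ⊆ MM(φ)`, and every `μ ∈ ZTA(φ)` maximizes
entropy among the maximizing measures of `φ`: `h(μ) = h_φ`. -/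
theorem statement14 (d : ℕ) (hd : 1 ≤ d) (A : Type) [Fintype A] [TopologicalSpace A]
    [DiscreteTopology A] [MeasurableSpace A] [BorelSpace A]
    (φ : Cfg d A → ℝ) (hφ : Continuous φ) :
    ZTA φ ⊆ MM φ ∧ ∀ μ ∈ ZTA φ, entropy μ = hPhi φ :=
  statement14_general d A φ hφ

end Freezing
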